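/- arXiv:2304.12690 — 8 statements merged into one kernel-verified Lean document; each statement's English description precedes it below -/
import Mathlib

section
/- Let P be an n×m matrix with nonnegative real entries summing to 1, and let λ_1,…,λ_r be positive reals. Then the following are equivalent: (i) there exist a dimension d_A, a dimension d_B, and families of vectors v_x^i ∈ ℂ^{d_A} (x∈[n], i∈[r]) and w_y^i ∈ ℂ^{d_B} (y∈[m], i∈[r]) such that ∑_{x=1}^n ⟨v_x^j, v_x^i⟩ = δ_{ij}·√λ_i for all i,j∈[r], ∑_{y=1}^m ⟨w_y^j, w_y^i⟩ = δ_{ij}·√λ_i for all i,j∈[r], and ∑_{i,j=1}^r ⟨v_x^j, v_x^i⟩·⟨w_y^j, w_y^i⟩ = P(x,y) for all x∈[n], y∈[m]; (ii) there exists a diagonal form of PSD factorization of P with respect to Λ = diag(√λ_1,…,√λ_r), i.e., r×r positive semidefinite complex matrices C_1,…,C_n and D_1,…,D_m with tr(C_x D_y) = P(x,y) for all x,y and ∑_{x=1}^n C_x = ∑_{y=1}^m D_y = diag(√λ_1,…,√λ_r). -/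
open Matrix
open scoped ComplexOrder

/-!
Write the vectors `v x i` as the rows of a matrix `V x`. The Gram matrix `(⟨v x j, v x i⟩)ᵢⱼ` is
then `V x * (V x)ᴴ`, and every positive semidefinite matrix has this form, so `C x` ranges exactly
over such Gram matrices. The bilinear expression `∑ᵢⱼ Cᵢⱼ Gᵢⱼ` in the third condition is
`tr (C * Gᵀ)`, hence `D y` is the transpose of the Gram matrix of the `w y i`; transposition
preserves positivity and fixes the diagonal matrix `Λ`.
-/

namespace Matrix

variable {ι κ 𝕜 : Type*} [Fintype κ] [RCLike 𝕜]

theorem of_mul_conjTranspose_of_apply (u : ι → κ → 𝕜) (i j : ι) :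
    (of u * (of u)ᴴ) i j = ∑ k, star (u j k) * u i k := by
  simp only [mul_apply, conjTranspose_apply, of_apply, mul_comm]

open scoped MatrixOrder in
theorem posSemidef_iff_exists_eq_mul_conjTranspose {A : Matrix κ κ 𝕜} :
    A.PosSemidef ↔ ∃ U : Matrix κ κ 𝕜, A = U * Uᴴ := by
  classical
  refine ⟨fun hA => ?_, fun ⟨U, hU⟩ => hU ▸ posSemidef_self_mul_conjTranspose U⟩
  obtain ⟨B, rfl⟩ := CStarAlgebra.nonneg_iff_eq_star_mul_self.mp hA.nonneg
  exact ⟨Bᴴ, by rw [conjTranspose_conjTranspose, star_eq_conjTranspose]⟩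

theorem forall_sum_apply_eq_ite_iff {α R : Type*} [Fintype α] [DecidableEq ι]
    [AddCommMonoid R] (A : α → Matrix ι ι R) (d : ι → R) :
    (∀ i j, ∑ x, A x i j = if i = j then d i else 0) ↔ ∑ x, A x = diagonal d := by
  simp only [← Matrix.ext_iff, sum_apply, diagonal_apply]

end Matrix

theorem diagonal_psd_factorization_iff_gram_vectors_general
    (n m r : ℕ) (P : Matrix (Fin n) (Fin m) ℝ)
    (l : Fin r → ℝ) :
    (∃ (dA dB : ℕ) (v : Fin n → Fin r → Fin dA → ℂ) (w : Fin m → Fin r → Fin dB → ℂ),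
      (∀ i j : Fin r,
        ∑ x, ∑ k, star (v x j k) * v x i k
          = if i = j then (Real.sqrt (l i) : ℂ) else 0) ∧
      (∀ i j : Fin r,
        ∑ y, ∑ k, star (w y j k) * w y i k
          = if i = j then (Real.sqrt (l i) : ℂ) else 0) ∧
      (∀ x y,
        ∑ i, ∑ j, (∑ k, star (v x j k) * v x i k) * (∑ k, star (w y j k) * w y i k)
          = (P x y : ℂ)))
    ↔
    (∃ (C : Fin n → Matrix (Fin r) (Fin r) ℂ) (D : Fin m → Matrix (Fin r) (Fin r) ℂ),
      (∀ x, (C x).PosSemidef) ∧ (∀ y, (D y).PosSemidef) ∧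
      (∀ x y, (C x * D y).trace = (P x y : ℂ)) ∧
      (∑ x, C x) = Matrix.diagonal (fun i => (Real.sqrt (l i) : ℂ)) ∧
      (∑ y, D y) = Matrix.diagonal (fun i => (Real.sqrt (l i) : ℂ))) := by
  simp only [← of_mul_conjTranspose_of_apply, forall_sum_apply_eq_ite_iff, ← hadamard_apply,
    sum_hadamard_eq]
  constructor
  · rintro ⟨dA, dB, v, w, hv, hw, htr⟩
    refine ⟨fun x => of (v x) * (of (v x))ᴴ, fun y => (of (w y) * (of (w y))ᴴ)ᵀ,
      fun x => posSemidef_self_mul_conjTranspose _,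
      fun y => (posSemidef_self_mul_conjTranspose _).transpose, htr, hv, ?_⟩
    rw [← transpose_sum, hw, diagonal_transpose]
  · rintro ⟨C, D, hC, hD, htr, hCsum, hDsum⟩
    choose V hV using fun x => posSemidef_iff_exists_eq_mul_conjTranspose.mp (hC x)
    choose W hW using fun y => posSemidef_iff_exists_eq_mul_conjTranspose.mp (hD y).transpose
    obtain rfl : C = fun x => V x * (V x)ᴴ := funext hV
    obtain rfl : D = fun y => (W y * (W y)ᴴ)ᵀ := funext fun y => by rw [← hW, transpose_transpose]
    refine ⟨r, r, V, W, hCsum, ?_, htr⟩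
    rw [← diagonal_transpose, ← hDsum, transpose_sum]
    rfl

/-- Equivalence between the Gram-vector (purification) formulation and the
existence of a diagonal form of PSD factorization of `P` with respect to
`Λ = diagonal (√λ₁, …, √λᵣ)`. -/
theorem diagonal_psd_factorization_iff_gram_vectors
    (n m r : ℕ) (P : Matrix (Fin n) (Fin m) ℝ)
    (hP : ∀ x y, 0 ≤ P x y) (hPsum : ∑ x, ∑ y, P x y = 1)
    (l : Fin r → ℝ) (hl : ∀ i, 0 < l i) :
    (∃ (dA dB : ℕ) (v : Fin n → Fin r → Fin dA → ℂ) (w : Fin m → Fin r → Fin dB → ℂ),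
      (∀ i j : Fin r,
        ∑ x, ∑ k, star (v x j k) * v x i k
          = if i = j then (Real.sqrt (l i) : ℂ) else 0) ∧
      (∀ i j : Fin r,
        ∑ y, ∑ k, star (w y j k) * w y i k
          = if i = j then (Real.sqrt (l i) : ℂ) else 0) ∧
      (∀ x y,
        ∑ i, ∑ j, (∑ k, star (v x j k) * v x i k) * (∑ k, star (w y j k) * w y i k)
          = (P x y : ℂ)))
    ↔
    (∃ (C : Fin n → Matrix (Fin r) (Fin r) ℂ) (D : Fin m → Matrix (Fin r) (Fin r) ℂ),
      (∀ x, (C x).PosSemidef) ∧ (∀ y, (D y).PosSemidef) ∧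
      (∀ x y, (C x * D y).trace = (P x y : ℂ)) ∧
      (∑ x, C x) = Matrix.diagonal (fun i => (Real.sqrt (l i) : ℂ)) ∧
      (∑ y, D y) = Matrix.diagonal (fun i => (Real.sqrt (l i) : ℂ))) :=
  diagonal_psd_factorization_iff_gram_vectors_general n m r P l
end

section
/- Let λ_1,…,λ_r be positive reals with ∑_{i=1}^r λ_i = 1, and let Λ = diag(√λ_1,…,√λ_r) as an r×r complex matrix. Then the following are equivalent: (i) there exist r×r complex matrices A and B such that A, I−A, B, I−B are all positive semidefinite and tr(Λ A Λ B) = 1/2, tr(Λ(I−A)Λ(I−B)) = 1/2, tr(Λ A Λ(I−B)) = 0, and tr(Λ(I−A)Λ B) = 0; (ii) there exists a subset S ⊆ {1,…,r} with ∑_{i∈S} λ_i = 1/2. -/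
/-!
Conjugating by the invertible Hermitian matrix `Λ`, the two vanishing traces are traces of
products of positive semidefinite matrices, so the products themselves vanish. This algebra
forces `Λ B = A Λ` and `Λ A = B Λ`; hence `B` commutes with `Λ²`, therefore with its function `Λ`, and then
`A = B` is a projection commuting with `Λ² = diag(λ)`. Such a projection splits along the
eigenspaces of `diag(λ)`, and on each of them its trace is a rank, i.e. an integer at most the
multiplicity of the eigenvalue. Thus `1/2 = tr(Λ² A)` is a sum of `λᵢ` over some index set.
Conversely the diagonal projection onto a subset `S` with `∑_{i ∈ S} λᵢ = 1/2` works for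
both `A` and `B`.
-/

open Matrix Finset
open scoped ComplexOrder

theorem mul_eq_mul_of_mul_mul_mul_eq_zero {R : Type*} [Ring R] {L A B : R} (hL : IsLeftRegular L)
    (h₁ : L * A * L * (1 - B) = 0) (h₂ : L * (1 - A) * L * B = 0) : L * B = A * L := by
  refine hL ?_
  calc L * (L * B) = L * (1 - A) * L * B + L * A * L - L * A * L * (1 - B) := by noncomm_ring
    _ = L * (A * L) := by rw [h₁, h₂, zero_add, sub_zero, mul_assoc]

namespace Matrix

variable {n : Type*} [Fintype n]

open scoped MatrixOrder in
theorem PosSemidef.mul_eq_zero_of_trace_mul_eq_zero {𝕜 : Type*} [RCLike 𝕜] {X Y : Matrix n n 𝕜}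
    (hX : X.PosSemidef) (hY : Y.PosSemidef) (h : (X * Y).trace = 0) : X * Y = 0 := by
  classical
  obtain ⟨C, rfl⟩ := CStarAlgebra.nonneg_iff_eq_star_mul_self.mp hX.nonneg
  obtain ⟨D, rfl⟩ := CStarAlgebra.nonneg_iff_eq_star_mul_self.mp hY.nonneg
  have hCD : C * Dᴴ = 0 := by
    rw [← trace_conjTranspose_mul_self_eq_zero_iff, ← h, conjTranspose_mul,
      conjTranspose_conjTranspose, mul_assoc, trace_mul_comm]
    simp only [star_eq_conjTranspose, mul_assoc]
  calc star C * C * (star D * D) = star C * (C * Dᴴ) * D := by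
        simp only [star_eq_conjTranspose, mul_assoc]
    _ = 0 := by rw [hCD, mul_zero, zero_mul]

theorem trace_mul_mul_mul_comm {R : Type*} [CommSemiring R] (L X Y : Matrix n n R) :
    (L * X * L * Y).trace = (L * Y * L * X).trace := by
  rw [mul_assoc, trace_mul_comm, ← mul_assoc]

variable [DecidableEq n]

theorem commute_diagonal_of_commute_diagonal {R : Type*} [CommRing R] [NoZeroDivisors R]
    {d e : n → R} {M : Matrix n n R} (he : ∀ i j, d i = d j → e i = e j)
    (h : Commute (diagonal d) M) : Commute (diagonal e) M := by
  ext i j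
  have hij := congr_fun₂ h.eq i j
  simp only [diagonal_mul, mul_diagonal] at hij ⊢
  by_cases hM : M i j = 0
  · simp [hM]
  · rw [mul_comm, he i j (mul_right_cancel₀ hM (hij.trans (mul_comm _ _)))]

theorem trace_eq_rank_of_isIdempotentElem {K : Type*} [Field K] {P : Matrix n n K}
    (hP : IsIdempotentElem P) : P.trace = P.rank := by
  have : IsIdempotentElem (toLin' P) := hP.map toLinAlgEquiv'
  rw [← trace_toLin'_eq, (LinearMap.IsIdempotentElem.isProj_range _ this).trace, rank,
    toLin'_apply']

section Field

variable {K : Type*} [Field K] [DecidableEq K] {d : n → K} {P : Matrix n n K}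

theorem exists_card_eq_sum_diag_filter_eq (hP : IsIdempotentElem P)
    (hPd : Commute (diagonal d) P) (v : K) :
    ∃ T ⊆ ({i | d i = v} : Finset n), (#T : K) = ∑ i with d i = v, P i i := by
  set Q : Matrix n n K := diagonal fun i => if d i = v then 1 else 0
  have hQ : Commute Q P := commute_diagonal_of_commute_diagonal (fun i j h => by rw [h]) hPd
  have hPQ : IsIdempotentElem (P * Q) :=
    hP.mul_of_commute hQ.symm (by simp [Q, IsIdempotentElem, diagonal_mul_diagonal])
  have hrank : (P * Q).rank ≤ #{i | d i = v} := by
    refine (rank_mul_le_right _ _).trans_eq ?_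
    rw [rank_diagonal, Fintype.card_subtype]
    simp
  obtain ⟨T, hT, hcard⟩ := exists_subset_card_eq hrank
  refine ⟨T, hT, ?_⟩
  rw [hcard, ← trace_eq_rank_of_isIdempotentElem hPQ]
  simp [Q, trace, mul_diagonal, sum_filter]

theorem exists_sum_eq_trace_diagonal_mul (hP : IsIdempotentElem P)
    (hPd : Commute (diagonal d) P) : ∃ S : Finset n, ∑ i ∈ S, d i = (diagonal d * P).trace := by
  choose T hT_sub hT_card using exists_card_eq_sum_diag_filter_eq hP hPd
  have hT_eq {v : K} {i : n} (hi : i ∈ T v) : d i = v := (mem_filter.mp (hT_sub v hi)).2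
  have hT_disj : Set.PairwiseDisjoint ↑(univ.image d) T := fun v _ w _ hvw =>
    disjoint_left.mpr fun i hiv hiw => hvw ((hT_eq hiv).symm.trans (hT_eq hiw))
  refine ⟨(univ.image d).biUnion T, ?_⟩
  calc ∑ i ∈ (univ.image d).biUnion T, d i
      = ∑ v ∈ univ.image d, #(T v) * v := by
        rw [sum_biUnion hT_disj]
        exact sum_congr rfl fun v _ => by simp [sum_congr rfl fun i hi => hT_eq hi]
    _ = ∑ v ∈ univ.image d, ∑ i with d i = v, d i * P i i := by
        refine sum_congr rfl fun v _ => ?_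
        rw [hT_card, sum_mul]
        exact sum_congr rfl fun i hi => by rw [(mem_filter.mp hi).2, mul_comm]
    _ = (diagonal d * P).trace := by
        rw [sum_fiberwise_of_maps_to fun i _ => mem_image_of_mem d (mem_univ i)]
        simp [trace, diagonal_mul]

end Field

section SqrtDiagonal

variable {l : n → ℝ}

theorem diagonal_ofReal_sqrt_mul_self (hl : ∀ i, 0 ≤ l i) :
    diagonal (fun i => (√(l i) : ℂ)) * diagonal (fun i => (√(l i) : ℂ)) =
      diagonal fun i => (l i : ℂ) := by
  simp [diagonal_mul_diagonal, ← Complex.ofReal_mul, Real.mul_self_sqrt (hl _)]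

theorem eq_and_isIdempotentElem_of_trace_eq_zero (hl : ∀ i, 0 < l i) {A B : Matrix n n ℂ}
    (hA : A.PosSemidef) (hA' : (1 - A).PosSemidef) (hB : B.PosSemidef) (hB' : (1 - B).PosSemidef)
    (h₁ : (diagonal (fun i => (√(l i) : ℂ)) * A * diagonal (fun i => (√(l i) : ℂ)) *
      (1 - B)).trace = 0)
    (h₂ : (diagonal (fun i => (√(l i) : ℂ)) * (1 - A) * diagonal (fun i => (√(l i) : ℂ)) *
      B).trace = 0) :
    A = B ∧ IsIdempotentElem A ∧ Commute (diagonal fun i => (√(l i) : ℂ)) A := by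
  set L : Matrix n n ℂ := diagonal fun i => (√(l i) : ℂ)
  have hLh : L.IsHermitian := isHermitian_diagonal_of_self_adjoint _ (by ext; simp)
  have hLu : IsUnit L := isUnit_diagonal.mpr <| Pi.isUnit_iff.mpr fun i =>
    (Complex.ofReal_ne_zero.mpr (Real.sqrt_ne_zero'.mpr (hl i))).isUnit
  have hconj {X : Matrix n n ℂ} (hX : X.PosSemidef) : (L * X * L).PosSemidef := by
    simpa [hLh.eq] using hX.conjTranspose_mul_mul_same L
  have e₁ := (hconj hA).mul_eq_zero_of_trace_mul_eq_zero hB' h₁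
  have e₂ := (hconj hA').mul_eq_zero_of_trace_mul_eq_zero hB h₂
  have e₁' := (hconj hB').mul_eq_zero_of_trace_mul_eq_zero hA
    (by rw [trace_mul_mul_mul_comm]; exact h₁)
  have e₂' := (hconj hB).mul_eq_zero_of_trace_mul_eq_zero hA'
    (by rw [trace_mul_mul_mul_comm]; exact h₂)
  have hBA : L * B = A * L := mul_eq_mul_of_mul_mul_mul_eq_zero hLu.isRegular.left e₁ e₂
  have hAB : L * A = B * L := mul_eq_mul_of_mul_mul_mul_eq_zero hLu.isRegular.left e₂' e₁'
  have hLLB : Commute (diagonal fun i => (l i : ℂ)) B := by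
    rw [← diagonal_ofReal_sqrt_mul_self fun i => (hl i).le, Commute, SemiconjBy, mul_assoc, hBA,
      ← mul_assoc, hAB, mul_assoc]
  have hLB : Commute L B := commute_diagonal_of_commute_diagonal
    (fun i j h => by rw [Complex.ofReal_inj.mp h]) hLLB
  obtain rfl : A = B := hLu.mul_left_cancel (hAB.trans hLB.eq.symm)
  refine ⟨rfl, ?_, hLB⟩
  have hLL_mul : L * L * (A * (1 - A)) = L * L * 0 := by
    rw [mul_zero, ← e₁, mul_assoc L A L, ← hLB.eq]
    simp only [mul_assoc]
  have := (hLu.mul hLu).mul_left_cancel hLL_mul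
  rwa [mul_sub, mul_one, sub_eq_zero, eq_comm] at this

theorem trace_diagonal_sqrt_mul_ite_mem (hl : ∀ i, 0 ≤ l i) (S T : Finset n) :
    (diagonal (fun i => (√(l i) : ℂ)) * diagonal (fun i => if i ∈ S then 1 else 0) *
      diagonal (fun i => (√(l i) : ℂ)) * diagonal (fun i => if i ∈ T then 1 else 0)).trace =
      ∑ i ∈ S ∩ T, (l i : ℂ) := by
  calc _ = ∑ i, if i ∈ S ∩ T then (l i : ℂ) else 0 := by
        simp only [diagonal_mul_diagonal, trace_diagonal]
        refine sum_congr rfl fun i _ => ?_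
        by_cases hS : i ∈ S <;> by_cases hT : i ∈ T <;>
          simp [hS, hT, ← Complex.ofReal_mul, Real.mul_self_sqrt (hl i)]
    _ = ∑ i ∈ S ∩ T, (l i : ℂ) := by rw [sum_ite_mem, univ_inter]

end SqrtDiagonal

theorem one_sub_diagonal_ite_mem {R : Type*} [Ring R] (S : Finset n) :
    1 - diagonal (fun i => if i ∈ S then (1 : R) else 0) =
      diagonal fun i => if i ∈ Sᶜ then 1 else 0 := by
  rw [← diagonal_one, diagonal_sub]
  congr 1
  ext i
  by_cases hi : i ∈ S <;> simp [hi]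

end Matrix

/-- Correctness of the SUBSET-SUM reduction for generating the correlation
`(1/2)·I₂` from a pure state with squared Schmidt coefficients `λ₁, …, λᵣ`. -/
theorem measurement_on_pure_state_generates_half_identity_iff_subset_sum
    (r : ℕ) (l : Fin r → ℝ) (hl : ∀ i, 0 < l i) (hsum : ∑ i, l i = 1)
    (Λ : Matrix (Fin r) (Fin r) ℂ)
    (hΛ : Λ = Matrix.diagonal (fun i => (Real.sqrt (l i) : ℂ))) :
    (∃ A B : Matrix (Fin r) (Fin r) ℂ,
      A.PosSemidef ∧ (1 - A).PosSemidef ∧ B.PosSemidef ∧ (1 - B).PosSemidef ∧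
      (Λ * A * Λ * B).trace = 1 / 2 ∧
      (Λ * (1 - A) * Λ * (1 - B)).trace = 1 / 2 ∧
      (Λ * A * Λ * (1 - B)).trace = 0 ∧
      (Λ * (1 - A) * Λ * B).trace = 0)
    ↔ ∃ S : Finset (Fin r), ∑ i ∈ S, l i = 1 / 2 := by
  subst hΛ
  have hLL := diagonal_ofReal_sqrt_mul_self fun i => (hl i).le
  constructor
  · rintro ⟨A, B, hA, hA', hB, hB', h₁, -, h₃, h₄⟩
    obtain ⟨rfl, hA_idem, hLA⟩ := eq_and_isIdempotentElem_of_trace_eq_zero hl hA hA' hB hB' h₃ h₄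
    obtain ⟨S, hS⟩ := exists_sum_eq_trace_diagonal_mul hA_idem (hLL ▸ hLA.mul_left hLA)
    refine ⟨S, Complex.ofReal_injective ?_⟩
    push_cast
    rw [hS, ← hLL, ← h₁, mul_assoc _ A, ← hLA.eq]
    simp only [mul_assoc, hA_idem.eq]
  · rintro ⟨S, hS⟩
    have hSc : ∑ i ∈ Sᶜ, l i = 1 / 2 := by linarith [sum_add_sum_compl S l]
    have hP (T : Finset (Fin r)) : (diagonal fun i => if i ∈ T then (1 : ℂ) else 0).PosSemidef :=
      PosSemidef.diagonal fun i => by by_cases hi : i ∈ T <;> simp [hi]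
    have htr := trace_diagonal_sqrt_mul_ite_mem fun i => (hl i).le
    refine ⟨_, _, hP S, ?_, hP S, ?_, ?_, ?_, ?_, ?_⟩ <;>
      simp only [one_sub_diagonal_ite_mem, htr, hP, inter_self, inter_compl, sum_empty]
    · simp [← Complex.ofReal_sum, hS]
    · simp [← Complex.ofReal_sum, hSc]
    · rw [inter_comm, inter_compl, sum_empty]
end

section
/- Let P be an n×m matrix with nonnegative real entries, let λ_1,…,λ_r be positive reals, and suppose P admits a diagonal form of PSD factorization with respect to Λ = diag(√λ_1,…,√λ_r), i.e., there exist r×r positive semidefinite complex matrices C_1,…,C_n and D_1,…,D_m with tr(C_x D_y) = P(x,y) for all x,y and ∑_{x=1}^n C_x = ∑_{y=1}^m D_y = Λ. Then for all x∈[n] and y∈[m], (min_{1≤i≤r} λ_i)·P(x,y) ≤ (∑_{j=1}^m P(x,j))·(∑_{i=1}^n P(i,y)). -/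
/-!
For positive semidefinite `A`, `B` one has `0 ≤ tr (A B)` (write `B = √B √B` and cycle the
trace), hence `tr (A B) ≤ tr A · tr B` because `B ≤ tr B • 1` in the Loewner order. If
`Λ ≥ s • 1` with `s ≥ 0`, then also `s · tr A ≤ tr (A Λ)`, so
`s² · tr (A B) ≤ tr (A Λ) · tr (B Λ)`. With `A = C x`, `B = D y`, `s = √(min λᵢ)` and the
marginal conditions, `tr (C x Λ)` and `tr (D y Λ)` are the row sum of `P` at `x` and its column
sum at `y`.
-/

open Matrix
open scoped ComplexOrder MatrixOrder

namespace Matrix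

variable {ι 𝕜 : Type*} [RCLike 𝕜]

theorem diagonal_le_diagonal [DecidableEq ι] {d e : ι → 𝕜} (h : ∀ i, d i ≤ e i) :
    diagonal d ≤ diagonal e := by
  rw [le_iff, diagonal_sub]
  exact PosSemidef.diagonal fun i => sub_nonneg.mpr (h i)

variable [Fintype ι]

theorem PosSemidef.trace_mul_nonneg {A B : Matrix ι ι 𝕜} (hA : A.PosSemidef)
    (hB : B.PosSemidef) : 0 ≤ (A * B).trace := by
  classical
  rw [← CFC.sqrt_mul_sqrt_self B hB.nonneg, ← mul_assoc, trace_mul_cycle]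
  exact (conjugate_nonneg_of_nonneg hA.nonneg (CFC.sqrt_nonneg B)).posSemidef.trace_nonneg

theorem PosSemidef.trace_mul_le_trace_mul {A B B' : Matrix ι ι 𝕜} (hA : A.PosSemidef)
    (hB : B ≤ B') : (A * B).trace ≤ (A * B').trace := by
  simpa [mul_sub, trace_sub, sub_nonneg] using hA.trace_mul_nonneg (le_iff.mp hB)

theorem PosSemidef.le_trace_smul_one [DecidableEq ι] {A : Matrix ι ι 𝕜} (hA : A.PosSemidef) :
    A ≤ A.trace • 1 := by
  have : A ≤ algebraMap ℝ (Matrix ι ι 𝕜) (∑ i, hA.1.eigenvalues i) := by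
    refine le_algebraMap_of_spectrum_le fun x hx => ?_
    obtain ⟨i, rfl⟩ := hA.1.spectrum_real_eq_range_eigenvalues ▸ hx
    exact Finset.single_le_sum (fun j _ => hA.eigenvalues_nonneg j) (Finset.mem_univ i)
  rwa [Algebra.algebraMap_eq_smul_one, RCLike.real_smul_eq_coe_smul (K := 𝕜), RCLike.ofReal_sum,
    ← hA.1.trace_eq_sum_eigenvalues] at this

theorem PosSemidef.trace_mul_le_trace_mul_trace {A B : Matrix ι ι 𝕜} (hA : A.PosSemidef)
    (hB : B.PosSemidef) : (A * B).trace ≤ A.trace * B.trace := by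
  classical
  calc (A * B).trace ≤ (A * (B.trace • 1)).trace :=
        hA.trace_mul_le_trace_mul hB.le_trace_smul_one
    _ = A.trace * B.trace := by simp [mul_comm]

theorem PosSemidef.sq_mul_trace_mul_le [DecidableEq ι] {A B Λ : Matrix ι ι 𝕜}
    (hA : A.PosSemidef) (hB : B.PosSemidef) {s : 𝕜} (hs : 0 ≤ s) (hΛ : s • 1 ≤ Λ) :
    s ^ 2 * (A * B).trace ≤ (A * Λ).trace * (B * Λ).trace := by
  have hsA : s * A.trace ≤ (A * Λ).trace := by simpa using hA.trace_mul_le_trace_mul hΛ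
  have hsB : s * B.trace ≤ (B * Λ).trace := by simpa using hB.trace_mul_le_trace_mul hΛ
  calc s ^ 2 * (A * B).trace ≤ s ^ 2 * (A.trace * B.trace) :=
        mul_le_mul_of_nonneg_left (hA.trace_mul_le_trace_mul_trace hB) (pow_nonneg hs 2)
    _ = (s * A.trace) * (s * B.trace) := by ring
    _ ≤ (A * Λ).trace * (B * Λ).trace :=
        mul_le_mul hsA hsB (mul_nonneg hs hB.trace_nonneg)
          ((mul_nonneg hs hA.trace_nonneg).trans hsA)

end Matrix

theorem min_schmidt_coefficient_necessary_condition_general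
    (n m r : ℕ) (P : Matrix (Fin n) (Fin m) ℝ)
    (l : Fin r → ℝ) (hl : ∀ i, 0 < l i)
    (C : Fin n → Matrix (Fin r) (Fin r) ℂ) (D : Fin m → Matrix (Fin r) (Fin r) ℂ)
    (hC : ∀ x, (C x).PosSemidef) (hD : ∀ y, (D y).PosSemidef)
    (htr : ∀ x y, (C x * D y).trace = (P x y : ℂ))
    (hCsum : (∑ x, C x) = Matrix.diagonal (fun i => (Real.sqrt (l i) : ℂ)))
    (hDsum : (∑ y, D y) = Matrix.diagonal (fun i => (Real.sqrt (l i) : ℂ))) :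
    ∀ x y, (⨅ i, l i) * P x y ≤ (∑ j, P x j) * (∑ i, P i y) := by
  intro x y
  set Λ := Matrix.diagonal (fun i => (Real.sqrt (l i) : ℂ))
  set t := ⨅ i, l i
  have ht : 0 ≤ t := Real.iInf_nonneg fun i => (hl i).le
  have hΛ : (Real.sqrt t : ℂ) • (1 : Matrix (Fin r) (Fin r) ℂ) ≤ Λ := by
    rw [smul_one_eq_diagonal]
    refine diagonal_le_diagonal fun i => Complex.real_le_real.mpr (Real.sqrt_le_sqrt ?_)
    exact ciInf_le (Set.finite_range l).bddBelow i
  have hrow : (C x * Λ).trace = ∑ j, P x j := by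
    rw [← hDsum, Finset.mul_sum, trace_sum]
    push_cast
    exact Finset.sum_congr rfl fun j _ => htr x j
  have hcol : (D y * Λ).trace = ∑ i, P i y := by
    rw [trace_mul_comm, ← hCsum, Finset.sum_mul, trace_sum]
    push_cast
    exact Finset.sum_congr rfl fun i _ => htr i y
  have key :=
    (hC x).sq_mul_trace_mul_le (hD y) (Complex.zero_le_real.mpr (Real.sqrt_nonneg t)) hΛ
  rw [htr, hrow, hcol, ← Complex.ofReal_pow, Real.sq_sqrt ht] at key
  exact_mod_cast key

/-- If `P` admits a diagonal form of PSD factorization with respect to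
`Λ = diagonal (√λ₁, …, √λᵣ)`, then `(min_i λᵢ)·P(x,y) ≤ (∑_j P(x,j))·(∑_i P(i,y))`
for all `x, y`. -/
theorem min_schmidt_coefficient_necessary_condition
    (n m r : ℕ) (P : Matrix (Fin n) (Fin m) ℝ)
    (hP : ∀ x y, 0 ≤ P x y)
    (l : Fin r → ℝ) (hl : ∀ i, 0 < l i)
    (C : Fin n → Matrix (Fin r) (Fin r) ℂ) (D : Fin m → Matrix (Fin r) (Fin r) ℂ)
    (hC : ∀ x, (C x).PosSemidef) (hD : ∀ y, (D y).PosSemidef)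
    (htr : ∀ x y, (C x * D y).trace = (P x y : ℂ))
    (hCsum : (∑ x, C x) = Matrix.diagonal (fun i => (Real.sqrt (l i) : ℂ)))
    (hDsum : (∑ y, D y) = Matrix.diagonal (fun i => (Real.sqrt (l i) : ℂ))) :
    ∀ x y, (⨅ i, l i) * P x y ≤ (∑ j, P x j) * (∑ i, P i y) :=
  min_schmidt_coefficient_necessary_condition_general n m r P l hl C D hC hD htr hCsum hDsum
end

section
/- Let C₁ and C₂ be r×r positive semidefinite complex matrices, and let D₁,…,D_m be r×r positive semidefinite complex matrices with ∑_{y=1}^m D_y = I (an r-dimensional POVM). Then ( ∑_{y=1}^m √(tr(C₁ D_y)) · √(tr(C₂ D_y)) )² ≥ tr(C₁ C₂). -/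
/-!
Write `C₁ = B₁ᴴ B₁`, `C₂ = B₂ᴴ B₂` and `D_y = Q_yᴴ Q_y`. Cycling the trace gives
`tr (C₁ C₂) = ‖B₂ B₁ᴴ‖²` in the Frobenius norm, and `∑ D_y = 1` splits `B₂ B₁ᴴ` as
`∑_y (Q_y B₂ᴴ)ᴴ (Q_y B₁ᴴ)`. The triangle inequality and submultiplicativity of the Frobenius norm
bound `‖B₂ B₁ᴴ‖` by `∑_y ‖Q_y B₁ᴴ‖ ‖Q_y B₂ᴴ‖ = ∑_y √(tr (C₁ D_y)) √(tr (C₂ D_y))`.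
-/

open Matrix
open scoped ComplexOrder Matrix.Norms.Frobenius

namespace Matrix

variable {𝕜 : Type*} [RCLike 𝕜] {l m n : Type*} [Fintype l] [Fintype m] [Fintype n]

theorem PosSemidef.exists_eq_conjTranspose_mul_self {A : Matrix n n 𝕜} (hA : A.PosSemidef) :
    ∃ B : Matrix n n 𝕜, A = Bᴴ * B := by
  classical
  open scoped MatrixOrder in
  exact CStarAlgebra.nonneg_iff_eq_star_mul_self.mp hA.nonneg

theorem re_trace_conjTranspose_mul_self (A : Matrix m n 𝕜) :
    RCLike.re (Aᴴ * A).trace = ‖A‖ ^ 2 := by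
  rw [frobenius_norm_def, ← Real.rpow_natCast, ← Real.rpow_mul (by positivity), Finset.sum_comm]
  norm_num [trace, mul_apply, RCLike.conj_mul]

theorem re_trace_conjTranspose_mul_self_mul_conjTranspose_mul_self (A : Matrix l n 𝕜)
    (B : Matrix m n 𝕜) : RCLike.re (Aᴴ * A * (Bᴴ * B)).trace = ‖B * Aᴴ‖ ^ 2 := by
  rw [← re_trace_conjTranspose_mul_self, conjTranspose_mul, conjTranspose_conjTranspose,
    Matrix.mul_assoc, trace_mul_comm Aᴴ]
  simp only [Matrix.mul_assoc]

theorem norm_mul_mul_conjTranspose_le {D : Matrix n n 𝕜} (hD : D.PosSemidef)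
    (A : Matrix l n 𝕜) (B : Matrix m n 𝕜) :
    ‖B * D * Aᴴ‖ ≤
      √(RCLike.re (Aᴴ * A * D).trace) * √(RCLike.re (Bᴴ * B * D).trace) := by
  obtain ⟨Q, rfl⟩ := hD.exists_eq_conjTranspose_mul_self
  have hfactor : B * (Qᴴ * Q) * Aᴴ = (Q * Bᴴ)ᴴ * (Q * Aᴴ) := by
    simp only [conjTranspose_mul, conjTranspose_conjTranspose, Matrix.mul_assoc]
  rw [re_trace_conjTranspose_mul_self_mul_conjTranspose_mul_self,
    re_trace_conjTranspose_mul_self_mul_conjTranspose_mul_self, Real.sqrt_sq (norm_nonneg _),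
    Real.sqrt_sq (norm_nonneg _), hfactor, mul_comm ‖Q * Aᴴ‖]
  simpa only [frobenius_norm_conjTranspose] using frobenius_norm_mul (Q * Bᴴ)ᴴ (Q * Aᴴ)

end Matrix

/-- For PSD matrices `C₁, C₂` and a POVM `{D_y}` (PSD matrices summing to the
identity), `(∑_y √(tr(C₁ D_y))·√(tr(C₂ D_y)))² ≥ tr(C₁ C₂)`. -/
theorem classical_fidelity_squared_ge_trace_product
    (r m : ℕ) (C₁ C₂ : Matrix (Fin r) (Fin r) ℂ)
    (hC₁ : C₁.PosSemidef) (hC₂ : C₂.PosSemidef)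
    (D : Fin m → Matrix (Fin r) (Fin r) ℂ)
    (hD : ∀ y, (D y).PosSemidef) (hDsum : ∑ y, D y = 1) :
    (C₁ * C₂).trace.re ≤
      (∑ y, Real.sqrt ((C₁ * D y).trace.re) * Real.sqrt ((C₂ * D y).trace.re)) ^ 2 := by
  obtain ⟨B₁, rfl⟩ := hC₁.exists_eq_conjTranspose_mul_self
  obtain ⟨B₂, rfl⟩ := hC₂.exists_eq_conjTranspose_mul_self
  have hsplit : B₂ * B₁ᴴ = ∑ y, B₂ * D y * B₁ᴴ := by
    rw [← Finset.sum_mul, ← Finset.mul_sum, hDsum, Matrix.mul_one]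
  calc (B₁ᴴ * B₁ * (B₂ᴴ * B₂)).trace.re = ‖∑ y, B₂ * D y * B₁ᴴ‖ ^ 2 := by
        rw [← hsplit]; exact re_trace_conjTranspose_mul_self_mul_conjTranspose_mul_self B₁ B₂
    _ ≤ (∑ y, ‖B₂ * D y * B₁ᴴ‖) ^ 2 := by gcongr; exact norm_sum_le _ _
    _ ≤ _ := by gcongr with y; exact norm_mul_mul_conjTranspose_le (hD y) B₁ B₂
end

section
/- Let P be an n×m matrix with nonnegative real entries summing to 1, let λ_1,…,λ_r be positive reals, and suppose P admits a diagonal form of PSD factorization with respect to Λ = diag(√λ_1,…,√λ_r), i.e., there exist r×r positive semidefinite complex matrices C_1,…,C_n and D_1,…,D_m with tr(C_x D_y) = P(x,y) for all x,y and ∑_{x=1}^n C_x = ∑_{y=1}^m D_y = Λ. Then ∑_{i=1}^n ∑_{j=1}^n ( ∑_{y=1}^m √(P(i,y))·√(P(j,y)) )² ≥ ∑_{k=1}^r λ_k². -/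
/-!
Expanding `Λ⁴ = (∑ C)(∑ D)(∑ C)(∑ D)` gives `∑ λₖ² = ∑_{i,j,y,z} Re tr(Cᵢ D_y Cⱼ D_z)`.
Writing each positive semidefinite matrix as `Xᴴ X`, cyclicity turns every term into a Frobenius
pairing of products of the factors, so Cauchy–Schwarz and submultiplicativity of the Frobenius
norm bound it by `√(P(i,y) P(j,y) P(i,z) P(j,z))`; summing over `y, z` gives `F(Pᵢ, Pⱼ)²`.
-/

open Matrix
open scoped ComplexOrder

open scoped MatrixOrder in
theorem Matrix.PosSemidef.exists_eq_conjTranspose_mul_self_s11 {𝕜 n : Type*} [RCLike 𝕜] [Fintype n]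
    {A : Matrix n n 𝕜} (hA : A.PosSemidef) : ∃ B : Matrix n n 𝕜, A = Bᴴ * B := by
  classical
  exact CStarAlgebra.nonneg_iff_eq_star_mul_self.mp hA.nonneg

namespace Matrix

attribute [local instance] frobeniusSeminormedAddCommGroup

open RCLike

variable {𝕜 l m n : Type*} [RCLike 𝕜] [Fintype l] [Fintype m] [Fintype n]

theorem frobenius_norm_eq_sqrt {α : Type*} [SeminormedAddCommGroup α] (A : Matrix m n α) :
    ‖A‖ = √(∑ i, ∑ j, ‖A i j‖ ^ 2) := by
  simp only [frobenius_norm_def, Real.sqrt_eq_rpow, Real.rpow_two]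

theorem trace_mul_conjTranspose_self (A : Matrix m n 𝕜) :
    trace (A * Aᴴ) = ((‖A‖ ^ 2 : ℝ) : 𝕜) := by
  rw [frobenius_norm_eq_sqrt, Real.sq_sqrt (by positivity)]
  simp [trace, mul_apply, RCLike.mul_conj]

theorem frobenius_norm_trace_mul_le (A : Matrix m n 𝕜) (B : Matrix n m 𝕜) :
    ‖trace (A * B)‖ ≤ ‖A‖ * ‖B‖ := by
  rw [frobenius_norm_eq_sqrt, frobenius_norm_eq_sqrt,
    Finset.sum_comm (f := fun i j => ‖B i j‖ ^ 2)]
  calc ‖trace (A * B)‖ = ‖∑ i, ∑ k, A i k * B k i‖ := rfl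
    _ ≤ ∑ i, ∑ k, ‖A i k‖ * ‖B k i‖ := (norm_sum_le _ _).trans <| Finset.sum_le_sum fun i _ =>
        (norm_sum_le _ _).trans_eq <| by simp only [norm_mul]
    _ ≤ _ := by
      simp only [← Fintype.sum_prod_type' (f := fun i k => ‖A i k‖ * ‖B k i‖),
        ← Fintype.sum_prod_type' (f := fun i k => ‖A i k‖ ^ 2),
        ← Fintype.sum_prod_type' (f := fun i k => ‖B k i‖ ^ 2)]
      exact Real.sum_mul_le_sqrt_mul_sqrt _ _ _

theorem frobenius_norm_mul_conjTranspose (a : Matrix m n 𝕜) (u : Matrix l n 𝕜) :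
    ‖a * uᴴ‖ = √(re (trace (aᴴ * a * (uᴴ * u)))) := by
  have h : trace (aᴴ * a * (uᴴ * u)) = trace (a * uᴴ * (a * uᴴ)ᴴ) := by
    rw [conjTranspose_mul, conjTranspose_conjTranspose, Matrix.mul_assoc, trace_mul_comm,
      Matrix.mul_assoc, Matrix.mul_assoc, Matrix.mul_assoc]
  rw [h, trace_mul_conjTranspose_self, ofReal_re, Real.sqrt_sq (norm_nonneg _)]

theorem PosSemidef.norm_trace_mul_mul_mul_le {A B U V : Matrix n n 𝕜}
    (hA : A.PosSemidef) (hB : B.PosSemidef) (hU : U.PosSemidef) (hV : V.PosSemidef) :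
    ‖trace (A * U * B * V)‖ ≤
      √(re (trace (A * U))) * √(re (trace (B * U))) *
        (√(re (trace (A * V))) * √(re (trace (B * V)))) := by
  obtain ⟨a, rfl⟩ := hA.exists_eq_conjTranspose_mul_self_s11
  obtain ⟨b, rfl⟩ := hB.exists_eq_conjTranspose_mul_self_s11
  obtain ⟨u, rfl⟩ := hU.exists_eq_conjTranspose_mul_self_s11
  obtain ⟨v, rfl⟩ := hV.exists_eq_conjTranspose_mul_self_s11
  have hcyc : trace (aᴴ * a * (uᴴ * u) * (bᴴ * b) * (vᴴ * v)) =
      trace (a * uᴴ * (b * uᴴ)ᴴ * (b * vᴴ * (a * vᴴ)ᴴ)) := by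
    simp only [conjTranspose_mul, conjTranspose_conjTranspose, Matrix.mul_assoc]
    rw [trace_mul_comm]
    simp only [Matrix.mul_assoc]
  have hmul (X Y : Matrix n n 𝕜) : ‖X * Yᴴ‖ ≤ ‖X‖ * ‖Y‖ :=
    (frobenius_norm_mul X Yᴴ).trans_eq (by rw [frobenius_norm_conjTranspose])
  rw [hcyc, ← frobenius_norm_mul_conjTranspose, ← frobenius_norm_mul_conjTranspose,
    ← frobenius_norm_mul_conjTranspose, ← frobenius_norm_mul_conjTranspose]
  calc _ ≤ ‖a * uᴴ * (b * uᴴ)ᴴ‖ * ‖b * vᴴ * (a * vᴴ)ᴴ‖ := frobenius_norm_trace_mul_le _ _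
    _ ≤ ‖a * uᴴ‖ * ‖b * uᴴ‖ * (‖b * vᴴ‖ * ‖a * vᴴ‖) := by gcongr <;> exact hmul _ _
    _ = _ := by ring

theorem re_trace_sum_mul_sum_mul_sum_mul_sum_le {ι κ : Type*} [Fintype ι] [Fintype κ]
    {C : ι → Matrix n n 𝕜} {D : κ → Matrix n n 𝕜}
    (hC : ∀ i, (C i).PosSemidef) (hD : ∀ y, (D y).PosSemidef) :
    re (trace ((∑ i, C i) * (∑ y, D y) * (∑ i, C i) * (∑ y, D y))) ≤
      ∑ i, ∑ j, (∑ y, √(re (trace (C i * D y))) * √(re (trace (C j * D y)))) ^ 2 := by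
  calc _ = ∑ i, ∑ y, ∑ j, ∑ z, re (trace (C i * D y * C j * D z)) := by
        rw [Matrix.mul_assoc, Matrix.mul_assoc]
        simp_rw [Finset.sum_mul]
        simp_rw [Finset.mul_sum]
        simp only [trace_sum, map_sum, Matrix.mul_assoc]
    _ ≤ ∑ i, ∑ y, ∑ j, ∑ z, √(re (trace (C i * D y))) * √(re (trace (C j * D y))) *
          (√(re (trace (C i * D z))) * √(re (trace (C j * D z)))) := by
        gcongr with i _ y _ j _ z _
        exact (re_le_norm _).trans ((hC i).norm_trace_mul_mul_mul_le (hC j) (hD y) (hD z))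
    _ = _ := by
        simp only [sq, Finset.sum_mul_sum]
        exact Finset.sum_congr rfl fun i _ => Finset.sum_comm

end Matrix

theorem sum_fidelity_squares_ge_sum_squares_schmidt_general
    (n m r : ℕ) (P : Matrix (Fin n) (Fin m) ℝ)
    (l : Fin r → ℝ) (hl : ∀ i, 0 < l i)
    (C : Fin n → Matrix (Fin r) (Fin r) ℂ) (D : Fin m → Matrix (Fin r) (Fin r) ℂ)
    (hC : ∀ x, (C x).PosSemidef) (hD : ∀ y, (D y).PosSemidef)
    (htr : ∀ x y, (C x * D y).trace = (P x y : ℂ))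
    (hCsum : (∑ x, C x) = Matrix.diagonal (fun i => (Real.sqrt (l i) : ℂ)))
    (hDsum : (∑ y, D y) = Matrix.diagonal (fun i => (Real.sqrt (l i) : ℂ))) :
    ∑ k, (l k) ^ 2 ≤
      ∑ i, ∑ j, (∑ y, Real.sqrt (P i y) * Real.sqrt (P j y)) ^ 2 := by
  set Λ := diagonal (fun i => (√(l i) : ℂ))
  have hΛ (k : Fin r) : (√(l k) : ℂ) * √(l k) * √(l k) * √(l k) = (l k ^ 2 : ℝ) := by
    have h : (√(l k) : ℂ) ^ 2 = l k := by exact_mod_cast Real.sq_sqrt (hl k).le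
    push_cast
    linear_combination ((√(l k) : ℂ) ^ 2 + l k) * h
  calc ∑ k, l k ^ 2 = RCLike.re (trace (Λ * Λ * Λ * Λ)) := by
        simp only [Λ, diagonal_mul_diagonal, trace_diagonal, hΛ, map_sum, RCLike.re_to_complex,
          Complex.ofReal_re]
    _ ≤ ∑ i, ∑ j,
          (∑ y, √(RCLike.re (trace (C i * D y))) * √(RCLike.re (trace (C j * D y)))) ^ 2 := by
        simpa only [hCsum, hDsum] using re_trace_sum_mul_sum_mul_sum_mul_sum_le hC hD
    _ = ∑ i, ∑ j, (∑ y, √(P i y) * √(P j y)) ^ 2 := by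
        simp only [htr, RCLike.re_to_complex, Complex.ofReal_re]

/-- If `P` (a probability matrix) admits a diagonal form of PSD factorization
with respect to `Λ = diagonal (√λ₁, …, √λᵣ)`, then
`∑ᵢ ∑ⱼ F(Pᵢ, Pⱼ)² ≥ ∑ₖ λₖ²`, where `F(Pᵢ, Pⱼ) = ∑_y √(P(i,y))·√(P(j,y))`. -/
theorem sum_fidelity_squares_ge_sum_squares_schmidt
    (n m r : ℕ) (P : Matrix (Fin n) (Fin m) ℝ)
    (hP : ∀ x y, 0 ≤ P x y) (hPsum : ∑ x, ∑ y, P x y = 1)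
    (l : Fin r → ℝ) (hl : ∀ i, 0 < l i)
    (C : Fin n → Matrix (Fin r) (Fin r) ℂ) (D : Fin m → Matrix (Fin r) (Fin r) ℂ)
    (hC : ∀ x, (C x).PosSemidef) (hD : ∀ y, (D y).PosSemidef)
    (htr : ∀ x y, (C x * D y).trace = (P x y : ℂ))
    (hCsum : (∑ x, C x) = Matrix.diagonal (fun i => (Real.sqrt (l i) : ℂ)))
    (hDsum : (∑ y, D y) = Matrix.diagonal (fun i => (Real.sqrt (l i) : ℂ))) :
    ∑ k, (l k) ^ 2 ≤
      ∑ i, ∑ j, (∑ y, Real.sqrt (P i y) * Real.sqrt (P j y)) ^ 2 :=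
  sum_fidelity_squares_ge_sum_squares_schmidt_general n m r P l hl C D hC hD htr hCsum hDsum
end

section
/- Let P and Q be n×m matrices with nonnegative real entries, and let ρ = ∑_{x,y} P(x,y)·|x⟩⟨x|⊗|y⟩⟨y| and σ = ∑_{x,y} Q(x,y)·|x⟩⟨x|⊗|y⟩⟨y| be the corresponding diagonal matrices of size nm×nm. Suppose there are finite families of n×n complex matrices {E_i}_{i∈I} and m×m complex matrices {F_j}_{j∈J} with ∑_{i∈I} E_i†E_i = I_n and ∑_{j∈J} F_j†F_j = I_m such that ∑_{i∈I}∑_{j∈J} (E_i⊗F_j)·ρ·(E_i⊗F_j)† = σ. Then there exist column-stochastic matrices, i.e., an n×n real matrix M and an m×m real matrix N with all entries nonnegative, ∑_{x'} M(x',x) = 1 for every x and ∑_{y'} N(y',y) = 1 for every y, such that Q(x',y') = ∑_{x,y} P(x,y)·M(x',x)·N(y',y) for all x', y'. -/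
open Matrix
open scoped Kronecker

lemma kraus_col_sum {k : ℕ} {ι : Type*} [Fintype ι]
    (A : ι → Matrix (Fin k) (Fin k) ℂ) (hA : ∑ i, (A i)ᴴ * A i = 1) (x : Fin k) :
    ∑ x', ∑ i, Complex.normSq (A i x' x) = 1 := by
  have h1 : (∑ i, (A i)ᴴ * A i) x x = (1 : Matrix (Fin k) (Fin k) ℂ) x x := by rw [hA]
  simp only [Matrix.sum_apply, Matrix.mul_apply, Matrix.conjTranspose_apply,
    Matrix.one_apply_eq] at h1
  have h2 : ((∑ x', ∑ i, Complex.normSq (A i x' x) : ℝ) : ℂ) = ((1 : ℝ) : ℂ) := by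
    push_cast
    rw [← h1, Finset.sum_comm]
    refine Finset.sum_congr rfl fun i _ => Finset.sum_congr rfl fun x' _ => ?_
    rw [Complex.normSq_eq_conj_mul_self]
    rfl
  exact_mod_cast h2

/-- Quantum local operations have no advantage over classical local operations
for transforming one classical correlation into another: if local quantum channels (given by
Kraus operators `{E_i}`, `{F_j}`) transform the diagonal state encoding `P` into the diagonal
state encoding `Q`, then there are column-stochastic matrices `M, N` with
`Q(x',y') = ∑_{x,y} P(x,y)·M(x',x)·N(y',y)`. -/
theorem quantum_local_ops_no_advantage
    (n m : ℕ) (ι κ : Type*) [Fintype ι] [Fintype κ]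
    (P Q : Matrix (Fin n) (Fin m) ℝ)
    (hP : ∀ x y, 0 ≤ P x y) (hQ : ∀ x y, 0 ≤ Q x y)
    (E : ι → Matrix (Fin n) (Fin n) ℂ) (F : κ → Matrix (Fin m) (Fin m) ℂ)
    (hE : ∑ i, (E i)ᴴ * E i = 1) (hF : ∑ j, (F j)ᴴ * F j = 1)
    (h : ∑ i, ∑ j,
        (E i ⊗ₖ F j) * Matrix.diagonal (fun p : Fin n × Fin m => (P p.1 p.2 : ℂ))
          * (E i ⊗ₖ F j)ᴴ
      = Matrix.diagonal (fun p : Fin n × Fin m => (Q p.1 p.2 : ℂ))) :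
    ∃ (M : Matrix (Fin n) (Fin n) ℝ) (N : Matrix (Fin m) (Fin m) ℝ),
      (∀ x' x, 0 ≤ M x' x) ∧ (∀ y' y, 0 ≤ N y' y) ∧
      (∀ x, ∑ x', M x' x = 1) ∧ (∀ y, ∑ y', N y' y = 1) ∧
      (∀ x' y', Q x' y' = ∑ x, ∑ y, P x y * M x' x * N y' y) := by
  refine ⟨Matrix.of fun x' x => ∑ i, Complex.normSq (E i x' x),
          Matrix.of fun y' y => ∑ j, Complex.normSq (F j y' y),
          fun x' x => Finset.sum_nonneg fun i _ => Complex.normSq_nonneg _,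
          fun y' y => Finset.sum_nonneg fun j _ => Complex.normSq_nonneg _,
          kraus_col_sum E hE, kraus_col_sum F hF, ?_⟩
  intro x' y'
  have h1 := congrFun (congrFun h (x', y')) (x', y')
  simp only [Matrix.sum_apply, Matrix.mul_apply, Matrix.conjTranspose_apply,
    Matrix.diagonal_apply_eq, Matrix.kroneckerMap_apply, Matrix.diagonal_apply, mul_ite,
    mul_zero, Finset.sum_ite_eq', Finset.mem_univ, if_true] at h1
  have key : ∀ (i : ι) (j : κ) (x : Fin n) (y : Fin m),
      E i x' x * F j y' y * (P x y : ℂ) * star (E i x' x * F j y' y)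
        = (P x y : ℂ) * (Complex.normSq (E i x' x) : ℂ) * (Complex.normSq (F j y' y) : ℂ) := by
    intro i j x y
    simp only [star_mul', Complex.star_def]
    calc E i x' x * F j y' y * (P x y : ℂ)
          * ((starRingEnd ℂ) (E i x' x) * (starRingEnd ℂ) (F j y' y))
        = (P x y : ℂ) * (E i x' x * (starRingEnd ℂ) (E i x' x))
          * (F j y' y * (starRingEnd ℂ) (F j y' y)) := by ring
      _ = _ := by rw [Complex.mul_conj, Complex.mul_conj]
  have h2 : ((Q x' y' : ℝ) : ℂ) =
      ((∑ x, ∑ y, P x y * (∑ i, Complex.normSq (E i x' x))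
        * (∑ j, Complex.normSq (F j y' y)) : ℝ) : ℂ) := by
    rw [← h1]
    push_cast
    rw [Finset.sum_comm]
    refine Eq.trans (Finset.sum_congr rfl fun j _ => Finset.sum_comm) ?_
    rw [Finset.sum_comm]
    rw [Fintype.sum_prod_type]
    refine Finset.sum_congr rfl fun x _ => Finset.sum_congr rfl fun y _ => ?_
    simp only [key]
    rw [Finset.sum_comm]
    simp only [← Finset.mul_sum, ← Finset.sum_mul]
  have h3 := Complex.ofReal_injective h2
  simpa using h3
end

section
/- Let λ_1,…,λ_r be positive reals with ∑_{i=1}^r λ_i = 1, and let P₁ = diag(λ_1,…,λ_r) as an r×r real matrix. Then the following are equivalent: (i) there exist 2×r real matrices A and B with all entries nonnegative, A(1,j)+A(2,j) = 1 and B(1,j)+B(2,j) = 1 for every j∈[r], such that A·P₁·Bᵀ = (1/2)·I_{2×2}; (ii) there exists a subset S ⊆ {1,…,r} with ∑_{j∈S} λ_j = 1/2. -/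
open Matrix

lemma entry_formula (r : ℕ) (l : Fin r → ℝ) (A B : Matrix (Fin 2) (Fin r) ℝ)
    (i k : Fin 2) :
    (A * Matrix.diagonal l * Bᵀ) i k = ∑ j, A i j * l j * B k j := by
  rw [Matrix.mul_apply]
  simp only [Matrix.mul_diagonal, Matrix.transpose_apply]

/-- Correctness of the SUBSET-SUM reduction for classical seeds: local
classical stochastic post-processings of the diagonal correlation `diag(λ₁, …, λᵣ)` can
produce `(1/2)·I₂` iff some subset of the `λⱼ` sums to `1/2`. -/
theorem classical_seed_generates_half_identity_iff_subset_sum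
    (r : ℕ) (l : Fin r → ℝ) (hl : ∀ i, 0 < l i) (hsum : ∑ i, l i = 1) :
    (∃ A B : Matrix (Fin 2) (Fin r) ℝ,
      (∀ i j, 0 ≤ A i j) ∧ (∀ i j, 0 ≤ B i j) ∧
      (∀ j, A 0 j + A 1 j = 1) ∧ (∀ j, B 0 j + B 1 j = 1) ∧
      A * Matrix.diagonal l * Bᵀ = (1 / 2 : ℝ) • (1 : Matrix (Fin 2) (Fin 2) ℝ))
    ↔ ∃ S : Finset (Fin r), ∑ j ∈ S, l j = 1 / 2 := by
  constructor
  · rintro ⟨A, B, hA, hB, hAsum, hBsum, hprod⟩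
    have h00 : ∑ j, A 0 j * l j * B 0 j = 1 / 2 := by
      have := congrFun (congrFun hprod 0) 0
      rw [entry_formula] at this
      simpa using this
    have h01 : ∑ j, A 0 j * l j * B 1 j = 0 := by
      have := congrFun (congrFun hprod 0) 1
      rw [entry_formula] at this
      simpa [Matrix.one_apply] using this
    have h10 : ∑ j, A 1 j * l j * B 0 j = 0 := by
      have := congrFun (congrFun hprod 1) 0
      rw [entry_formula] at this
      simpa [Matrix.one_apply] using this
    have nonneg01 : ∀ j ∈ Finset.univ, 0 ≤ A 0 j * l j * B 1 j := fun j _ =>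
      mul_nonneg (mul_nonneg (hA 0 j) (hl j).le) (hB 1 j)
    have nonneg10 : ∀ j ∈ Finset.univ, 0 ≤ A 1 j * l j * B 0 j := fun j _ =>
      mul_nonneg (mul_nonneg (hA 1 j) (hl j).le) (hB 0 j)
    have z01 := (Finset.sum_eq_zero_iff_of_nonneg nonneg01).1 h01
    have z10 := (Finset.sum_eq_zero_iff_of_nonneg nonneg10).1 h10
    refine ⟨Finset.univ.filter (fun j => A 0 j ≠ 0 ∧ B 0 j ≠ 0), ?_⟩
    rw [← h00]
    rw [Finset.sum_filter]
    apply Finset.sum_congr rfl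
    intro j _
    by_cases hA0 : A 0 j = 0
    · simp [hA0]
    by_cases hB0 : B 0 j = 0
    · simp [hA0, hB0]
    · have hB1 : B 1 j = 0 := by
        have := z01 j (Finset.mem_univ j)
        rcases mul_eq_zero.1 this with h | h
        · rcases mul_eq_zero.1 h with h | h
          · exact absurd h hA0
          · exact absurd h (hl j).ne'
        · exact h
      have hA1 : A 1 j = 0 := by
        have := z10 j (Finset.mem_univ j)
        rcases mul_eq_zero.1 this with h | h
        · rcases mul_eq_zero.1 h with h | h
          · exact h
          · exact absurd h (hl j).ne'
        · exact absurd h hB0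
      have hA0' : A 0 j = 1 := by have := hAsum j; linarith
      have hB0' : B 0 j = 1 := by have := hBsum j; linarith
      simp [hA0', hB0', hA0, hB0]
  · rintro ⟨S, hS⟩
    set A : Matrix (Fin 2) (Fin r) ℝ :=
      Matrix.of fun i j => if (i = 0 ↔ j ∈ S) then (1 : ℝ) else 0 with hAdef
    refine ⟨A, A, ?_, ?_, ?_, ?_, ?_⟩
    · intro i j; dsimp [A]; split <;> norm_num
    · intro i j; dsimp [A]; split <;> norm_num
    · intro j; dsimp [A]; by_cases h : j ∈ S <;> simp [h]
    · intro j; dsimp [A]; by_cases h : j ∈ S <;> simp [h]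
    · have hSc : ∑ j ∈ Sᶜ, l j = 1 / 2 := by
        have := Finset.sum_add_sum_compl S l
        rw [hS, hsum] at this; linarith
      ext i k
      rw [entry_formula]
      fin_cases i <;> fin_cases k
      · show ∑ x, A 0 x * l x * A 0 x = ((1/2:ℝ) • (1:Matrix (Fin 2) (Fin 2) ℝ)) 0 0
        have h : ∀ j ∈ Finset.univ, A 0 j * l j * A 0 j = if j ∈ S then l j else 0 := by
          intro j _; by_cases h : j ∈ S <;> simp [A, h]
        rw [Finset.sum_congr rfl h, Finset.sum_ite_mem, Finset.univ_inter, hS]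
        simp [Matrix.one_apply]
      · show ∑ x, A 0 x * l x * A 1 x = ((1/2:ℝ) • (1:Matrix (Fin 2) (Fin 2) ℝ)) 0 1
        have h : ∀ j ∈ Finset.univ, A 0 j * l j * A 1 j = 0 := by
          intro j _; by_cases h : j ∈ S <;> simp [A, h]
        rw [Finset.sum_congr rfl h, Finset.sum_const_zero]
        simp [Matrix.one_apply]
      · show ∑ x, A 1 x * l x * A 0 x = ((1/2:ℝ) • (1:Matrix (Fin 2) (Fin 2) ℝ)) 1 0
        have h : ∀ j ∈ Finset.univ, A 1 j * l j * A 0 j = 0 := by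
          intro j _; by_cases h : j ∈ S <;> simp [A, h]
        rw [Finset.sum_congr rfl h, Finset.sum_const_zero]
        simp [Matrix.one_apply]
      · show ∑ x, A 1 x * l x * A 1 x = ((1/2:ℝ) • (1:Matrix (Fin 2) (Fin 2) ℝ)) 1 1
        have h : ∀ j ∈ Finset.univ, A 1 j * l j * A 1 j = if j ∈ Sᶜ then l j else 0 := by
          intro j _; by_cases h : j ∈ S <;> simp [A, h]
        rw [Finset.sum_congr rfl h, Finset.sum_ite_mem, Finset.univ_inter, hSc]
        simp [Matrix.one_apply]
end

section
/- Let λ_1,…,λ_r be strictly positive reals, and let A and B be 2×r real matrices with all entries nonnegative such that A(1,j)+A(2,j) = 1 and B(1,j)+B(2,j) = 1 for every j∈[r], and A·diag(λ_1,…,λ_r)·Bᵀ = (1/2)·I_{2×2}. Then A = B, every entry of A is 0 or 1, and there exists a subset S ⊆ {1,…,r} such that A(1,j) = B(1,j) = 1 for all j∈S, A(2,j) = B(2,j) = 1 for all j∉S, and ∑_{j∈S} λ_j = 1/2. -/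
open Matrix

/-- Structural claim in the NP-hardness proof for classical seeds: if
nonnegative column-stochastic post-processings `A, B` satisfy
`A·diag(λ₁,…,λᵣ)·Bᵀ = (1/2)·I₂` with all `λᵢ > 0`, then `A = B`, all entries of `A` are
`0` or `1`, and they determine a subset `S` with `∑_{j∈S} λⱼ = 1/2`. -/
theorem classical_seed_structure_of_stochastic_postprocessings
    (r : ℕ) (l : Fin r → ℝ) (hl : ∀ i, 0 < l i)
    (A B : Matrix (Fin 2) (Fin r) ℝ)
    (hA : ∀ i j, 0 ≤ A i j) (hB : ∀ i j, 0 ≤ B i j)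
    (hAs : ∀ j, A 0 j + A 1 j = 1) (hBs : ∀ j, B 0 j + B 1 j = 1)
    (h : A * Matrix.diagonal l * Bᵀ = (1 / 2 : ℝ) • (1 : Matrix (Fin 2) (Fin 2) ℝ)) :
    A = B ∧ (∀ i j, A i j = 0 ∨ A i j = 1) ∧
    ∃ S : Finset (Fin r),
      (∀ j ∈ S, A 0 j = 1 ∧ B 0 j = 1) ∧
      (∀ j ∉ S, A 1 j = 1 ∧ B 1 j = 1) ∧
      ∑ j ∈ S, l j = 1 / 2 := by
  classical
  have key : ∀ i k : Fin 2, ∑ j, A i j * l j * B k j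
      = if i = k then (1/2 : ℝ) else 0 := by
    intro i k
    have := congrFun (congrFun h i) k
    simpa [Matrix.mul_apply, Matrix.mul_diagonal, Matrix.one_apply,
      Matrix.smul_apply, Matrix.transpose_apply, Matrix.diagonal_apply,
      mul_ite, ite_mul, Finset.sum_ite_eq, Finset.sum_ite_eq'] using this
  have hterm : ∀ (i k : Fin 2) (j : Fin r), i ≠ k → A i j * l j * B k j = 0 := by
    intro i k j hik
    have hsum : ∑ j, A i j * l j * B k j = 0 := by
      rw [key]; simp [hik]
    have hnn : ∀ j ∈ Finset.univ, (0:ℝ) ≤ A i j * l j * B k j := by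
      intro j _
      exact mul_nonneg (mul_nonneg (hA i j) (hl j).le) (hB k j)
    exact (Finset.sum_eq_zero_iff_of_nonneg hnn).1 hsum j (Finset.mem_univ j)
  -- columnwise structure
  have col : ∀ j, (A 0 j = 1 ∧ A 1 j = 0 ∧ B 0 j = 1 ∧ B 1 j = 0) ∨
      (A 0 j = 0 ∧ A 1 j = 1 ∧ B 0 j = 0 ∧ B 1 j = 1) := by
    intro j
    have h01 := hterm 0 1 j (by decide)
    have h10 := hterm 1 0 j (by decide)
    have hlj := (hl j).ne'
    by_cases hA0 : A 0 j = 0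
    · right
      have hA1 : A 1 j = 1 := by have := hAs j; linarith
      have hB0 : B 0 j = 0 := by
        rcases mul_eq_zero.1 h10 with h' | h'
        · rcases mul_eq_zero.1 h' with h'' | h''
          · exact absurd h'' (by rw [hA1]; norm_num)
          · exact absurd h'' hlj
        · exact h'
      have hB1 : B 1 j = 1 := by have := hBs j; linarith
      exact ⟨hA0, hA1, hB0, hB1⟩
    · left
      have hB1 : B 1 j = 0 := by
        rcases mul_eq_zero.1 h01 with h' | h'
        · rcases mul_eq_zero.1 h' with h'' | h''
          · exact absurd h'' hA0
          · exact absurd h'' hlj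
        · exact h'
      have hB0 : B 0 j = 1 := by have := hBs j; linarith
      have hA1 : A 1 j = 0 := by
        rcases mul_eq_zero.1 h10 with h' | h'
        · rcases mul_eq_zero.1 h' with h'' | h''
          · exact h''
          · exact absurd h'' hlj
        · exact absurd h' (by rw [hB0]; norm_num)
      have hA0' : A 0 j = 1 := by have := hAs j; linarith
      exact ⟨hA0', hA1, hB0, hB1⟩
  have hAB : A = B := by
    funext i j
    rcases col j with ⟨a0, a1, b0, b1⟩ | ⟨a0, a1, b0, b1⟩ <;>
      fin_cases i <;> simp_all
  refine ⟨hAB, ?_, ?_⟩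
  · intro i j
    rcases col j with ⟨a0, a1, _, _⟩ | ⟨a0, a1, _, _⟩ <;>
      fin_cases i <;> simp_all
  · refine ⟨Finset.univ.filter fun j => A 0 j = 1, ?_, ?_, ?_⟩
    · intro j hj
      rw [Finset.mem_filter] at hj
      rcases col j with ⟨a0, a1, b0, b1⟩ | ⟨a0, a1, b0, b1⟩
      · exact ⟨a0, b0⟩
      · rw [a0] at hj; norm_num at hj
    · intro j hj
      rw [Finset.mem_filter] at hj
      rcases col j with ⟨a0, a1, b0, b1⟩ | ⟨a0, a1, b0, b1⟩
      · exact absurd ⟨Finset.mem_univ j, a0⟩ hj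
      · exact ⟨a1, b1⟩
    · have h00 := key 0 0
      rw [if_pos rfl] at h00
      rw [Finset.sum_filter, ← h00]
      apply Finset.sum_congr rfl
      intro j _
      rcases col j with ⟨a0, a1, b0, b1⟩ | ⟨a0, a1, b0, b1⟩
      · simp [a0, b0]
      · simp [a0]
end
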